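/- arXiv:2407.21784 — 2 statements merged into one kernel-verified Lean document; each statement's English description precedes it below -/
import Mathlib

section
/- With the setup of the free BV complex (Δ_cl a degree +1 derivation extending f^⋆ ↦ D(f), and δ the degree +1 BV contraction built from a symmetric bilinear form β), the operators anticommute: Δ_cl ∘ δ + δ ∘ Δ_cl = 0, provided β(D f, g) = β(f, D g) for all f, g (self-adjointness of D with respect to β). -/
/-- The monomial `f₁⋆ * ⋯ * f_m⋆ * g₁ * ⋯ * g_n` of the free graded-commutative algebra
on `V` placed in degrees `-1` (antifields, image of `anti`) and `0` (fields, image of `gen`). -/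
def BVmono {V A : Type*} [AddCommGroup V] [Module ℝ V] [Ring A] [Algebra ℝ A]
    (anti gen : V →ₗ[ℝ] A) (fs gs : List V) : A :=
  (fs.map fun v => anti v).prod * (gs.map fun v => gen v).prod


private lemma erase_erase {α : Type*} (l : List α) :
    ∀ a b : ℕ, a ≤ b → (l.eraseIdx (b+1)).eraseIdx a = (l.eraseIdx a).eraseIdx b := by
  induction l with
  | nil => intros; simp
  | cons x t ih =>
    intro a b h
    cases a with
    | zero => cases b <;> simp [List.eraseIdx_cons_succ]
    | succ a' =>
      cases b with
      | zero => omega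
      | succ b' => simp [List.eraseIdx_cons_succ, ih a' b' (by omega)]

private lemma sum_pairs_eq_zero {M : Type*} [AddCommGroup M] [Module ℝ M] (s : Finset (ℕ × ℕ))
    (hs : ∀ p ∈ s, (p.2, p.1) ∈ s)
    (F : ℕ → ℕ → M) (hF : ∀ p ∈ s, F p.1 p.2 = - F p.2 p.1) :
    ∑ p ∈ s, F p.1 p.2 = 0 := by
  have h1 : ∑ p ∈ s, F p.1 p.2 = ∑ p ∈ s, F p.2 p.1 :=
    Finset.sum_nbij' (fun p => (p.2, p.1)) (fun p => (p.2, p.1)) hs hs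
      (by simp) (by simp) (fun p hp => rfl)
  have h2 : ∑ p ∈ s, F p.1 p.2 = - ∑ p ∈ s, F p.1 p.2 := by
    nth_rewrite 2 [h1]
    rw [← Finset.sum_neg_distrib]
    exact Finset.sum_congr rfl fun p hp => by rw [hF p hp]
  have h3 : (2 : ℝ) • ∑ p ∈ s, F p.1 p.2 = 0 := by
    rw [two_smul]; nth_rewrite 2 [h2]; simp
  have := smul_eq_zero.mp h3
  simpa using this

private lemma reindex_sum {M : Type*} [AddCommMonoid M] (m : ℕ) (F : ℕ → ℕ → M) :
    ∑ i ∈ Finset.range m, ∑ k ∈ Finset.range (m-1), F i k =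
      ∑ p ∈ (Finset.range m ×ˢ Finset.range m).filter (fun p => p.1 ≠ p.2),
        F p.1 (if p.2 < p.1 then p.2 else p.2 - 1) := by
  rw [← Finset.sum_product']
  apply Finset.sum_nbij' (fun p => (p.1, if p.2 < p.1 then p.2 else p.2 + 1))
    (fun q => (q.1, if q.2 < q.1 then q.2 else q.2 - 1))
  · intro p hp
    simp only [Finset.mem_product, Finset.mem_range, Finset.mem_filter] at hp ⊢
    split_ifs <;> omega
  · intro q hq
    simp only [Finset.mem_product, Finset.mem_range, Finset.mem_filter] at hq ⊢
    split_ifs <;> omega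
  · intro p hp
    simp only [Finset.mem_product, Finset.mem_range] at hp
    ext <;> simp <;> split_ifs <;> omega
  · intro q hq
    simp only [Finset.mem_product, Finset.mem_range, Finset.mem_filter] at hq
    ext <;> simp <;> split_ifs <;> omega
  · intro p hp
    simp only [Finset.mem_product, Finset.mem_range] at hp
    congr 1
    split_ifs <;> omega

private lemma finsum_to_range {M : Type*} [AddCommMonoid M] {n : ℕ} (G : Fin n → M) (H : ℕ → M)
    (h : ∀ i : Fin n, G i = H i) : ∑ i : Fin n, G i = ∑ i ∈ Finset.range n, H i := by
  rw [← Fin.sum_univ_eq_sum_range]; exact Finset.sum_congr rfl fun i _ => h i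

private lemma pow_pred (b : ℕ) (hb : 1 ≤ b) : ((-1:ℝ))^(b-1) = -((-1:ℝ))^b := by
  have h : (-1:ℝ)^b = (-1)^(b-1) * (-1) := by
    conv_lhs => rw [show b = (b-1)+1 by omega]
    rw [pow_succ]
  rw [h]; ring

private lemma sign_antisymm (a b : ℕ) (hab : a ≠ b) :
    ((-1:ℝ))^a * (-1:ℝ)^(if b < a then b else b - 1)
      = -(((-1:ℝ))^b * (-1:ℝ)^(if a < b then a else a - 1)) := by
  rcases lt_or_gt_of_ne hab with h | h
  · rw [if_neg (by omega), if_pos h, pow_pred b (by omega)]; ring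
  · rw [if_pos h, if_neg (by omega), pow_pred a (by omega)]; ring

private lemma getD_eraseIdx {α : Type*} (d : α) (l : List α) (a b : ℕ) (ha : a < l.length)
    (hb : b < l.length) (hab : a ≠ b) :
    (l.eraseIdx a).getD (if b < a then b else b - 1) d = l.getD b d := by
  have hlen : (l.eraseIdx a).length = l.length - 1 := List.length_eraseIdx_of_lt ha
  have hlt : (if b < a then b else b - 1) < (l.eraseIdx a).length := by rw [hlen]; split_ifs <;> omega
  rw [List.getD_eq_getElem _ _ hlt, List.getD_eq_getElem _ _ hb, List.getElem_eraseIdx]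
  rcases lt_or_gt_of_ne hab with h | h
  · rw [dif_neg (by split_ifs <;> omega)]
    have hbb : (if b < a then b else b - 1) + 1 = b := by split_ifs <;> omega
    simp only [hbb]
  · rw [dif_pos (by split_ifs <;> omega)]
    have hbb : (if b < a then b else b - 1) = b := by split_ifs <;> omega
    simp only [hbb]

private lemma erase2_symm {α : Type*} (l : List α) (a b : ℕ) (hab : a ≠ b) :
    (l.eraseIdx a).eraseIdx (if b < a then b else b - 1)
      = (l.eraseIdx b).eraseIdx (if a < b then a else a - 1) := by
  rcases lt_or_gt_of_ne hab with h | h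
  · rw [if_neg (by omega), if_pos h, ← erase_erase l a (b-1) (by omega),
      show b - 1 + 1 = b by omega]
  · rw [if_pos h, if_neg (by omega), ← erase_erase l b (a-1) (by omega),
      show a - 1 + 1 = a by omega]

section Key

variable {V A : Type*} [AddCommGroup V] [Module ℝ V] [Ring A] [Algebra ℝ A]
  (β : V →ₗ[ℝ] V →ₗ[ℝ] ℝ) (D : V →ₗ[ℝ] V) (anti gen : V →ₗ[ℝ] A)
  (Δcl δ : A →ₗ[ℝ] A)

private lemma key
    (hβ : ∀ v w, β v w = β w v) (hD : ∀ f g, β (D f) g = β f (D g))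
    (hΔ : ∀ fs gs : List V,
      Δcl (BVmono anti gen fs gs) =
        ∑ i : Fin fs.length, ((-1 : ℝ) ^ (i : ℕ)) •
          BVmono anti gen (fs.eraseIdx (i : ℕ)) (D (fs.get i) :: gs))
    (hδ : ∀ fs gs : List V,
      δ (BVmono anti gen fs gs) =
        ∑ i : Fin fs.length, ∑ j : Fin gs.length,
          ((-1 : ℝ) ^ (i : ℕ) * β (fs.get i) (gs.get j)) •
            BVmono anti gen (fs.eraseIdx (i : ℕ)) (gs.eraseIdx (j : ℕ)))
    (fs gs : List V) :
    Δcl (δ (BVmono anti gen fs gs)) + δ (Δcl (BVmono anti gen fs gs)) = 0 := by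
  have hA : Δcl (δ (BVmono anti gen fs gs)) =
      ∑ i ∈ Finset.range fs.length, ∑ k ∈ Finset.range (fs.length - 1), ∑ j ∈ Finset.range gs.length,
        ((-1:ℝ)^i * β (fs.getD i 0) (gs.getD j 0) * (-1:ℝ)^k) • BVmono anti gen ((fs.eraseIdx i).eraseIdx k) (D ((fs.eraseIdx i).getD k 0) :: gs.eraseIdx j) := by
    rw [hδ fs gs]
    simp only [map_sum, map_smul, hΔ, Finset.smul_sum]
    refine finsum_to_range _ _ fun i => ?_
    rw [Finset.sum_comm]
    rw [show fs.length - 1 = (fs.eraseIdx (i:ℕ)).length from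
      (List.length_eraseIdx_of_lt i.isLt).symm]
    refine finsum_to_range _ _ fun k => ?_
    refine finsum_to_range _ _ fun j => ?_
    rw [smul_smul]
    simp only [List.get_eq_getElem,
      List.getD_eq_getElem _ _ i.isLt, List.getD_eq_getElem _ _ j.isLt,
      List.getD_eq_getElem _ _ k.isLt]
  have hB : δ (Δcl (BVmono anti gen fs gs)) =
      ∑ i ∈ Finset.range fs.length, ∑ k ∈ Finset.range (fs.length - 1), ∑ j ∈ Finset.range (gs.length + 1),
        ((-1:ℝ)^i * ((-1:ℝ)^k * β ((fs.eraseIdx i).getD k 0) ((D (fs.getD i 0) :: gs).getD j 0))) • BVmono anti gen ((fs.eraseIdx i).eraseIdx k) ((D (fs.getD i 0) :: gs).eraseIdx j) := by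
    rw [hΔ fs gs]
    simp only [map_sum, map_smul, hδ, Finset.smul_sum]
    refine finsum_to_range _ _ fun i => ?_
    rw [show fs.length - 1 = (fs.eraseIdx (i:ℕ)).length from
      (List.length_eraseIdx_of_lt i.isLt).symm]
    refine finsum_to_range _ _ fun k => ?_
    refine finsum_to_range _ _ fun j => ?_
    rw [smul_smul]
    simp only [List.get_eq_getElem, List.getD_eq_getElem _ _ i.isLt,
      List.getD_eq_getElem _ _ k.isLt]
    rw [List.getD_eq_getElem _ _
      (show (j:ℕ) < (D (fs[(i:ℕ)]'i.isLt) :: gs).length from by simpa using j.isLt)]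
  rw [hA, hB, ← Finset.sum_add_distrib]
  have hsplit : ∀ i ∈ Finset.range fs.length,
      ((∑ k ∈ Finset.range (fs.length - 1), ∑ j ∈ Finset.range gs.length, ((-1:ℝ)^i * β (fs.getD i 0) (gs.getD j 0) * (-1:ℝ)^k) • BVmono anti gen ((fs.eraseIdx i).eraseIdx k) (D ((fs.eraseIdx i).getD k 0) :: gs.eraseIdx j))
        + ∑ k ∈ Finset.range (fs.length - 1), ∑ j ∈ Finset.range (gs.length + 1), ((-1:ℝ)^i * ((-1:ℝ)^k * β ((fs.eraseIdx i).getD k 0) ((D (fs.getD i 0) :: gs).getD j 0))) • BVmono anti gen ((fs.eraseIdx i).eraseIdx k) ((D (fs.getD i 0) :: gs).eraseIdx j))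
      = (∑ k ∈ Finset.range (fs.length - 1), ∑ j ∈ Finset.range gs.length,
          (((-1:ℝ)^i * β (fs.getD i 0) (gs.getD j 0) * (-1:ℝ)^k) • BVmono anti gen ((fs.eraseIdx i).eraseIdx k) (D ((fs.eraseIdx i).getD k 0) :: gs.eraseIdx j) + ((-1:ℝ)^i * ((-1:ℝ)^k * β ((fs.eraseIdx i).getD k 0) (gs.getD j 0))) • BVmono anti gen ((fs.eraseIdx i).eraseIdx k) (D (fs.getD i 0) :: gs.eraseIdx j)))
        + ∑ k ∈ Finset.range (fs.length - 1), ((-1:ℝ)^i * ((-1:ℝ)^k * β ((fs.eraseIdx i).getD k 0) (D (fs.getD i 0)))) • BVmono anti gen ((fs.eraseIdx i).eraseIdx k) gs := by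
    intro i _
    rw [← Finset.sum_add_distrib, ← Finset.sum_add_distrib]
    refine Finset.sum_congr rfl fun k _ => ?_
    rw [Finset.sum_range_succ']
    simp only [List.getD_cons_succ, List.eraseIdx_cons_succ, List.getD_cons_zero,
      List.eraseIdx_cons_zero]
    rw [← add_assoc, ← Finset.sum_add_distrib]
  rw [Finset.sum_congr rfl hsplit, Finset.sum_add_distrib]
  have hz1 : (∑ i ∈ Finset.range fs.length, ∑ k ∈ Finset.range (fs.length - 1), ∑ j ∈ Finset.range gs.length,
      (((-1:ℝ)^i * β (fs.getD i 0) (gs.getD j 0) * (-1:ℝ)^k) • BVmono anti gen ((fs.eraseIdx i).eraseIdx k) (D ((fs.eraseIdx i).getD k 0) :: gs.eraseIdx j) + ((-1:ℝ)^i * ((-1:ℝ)^k * β ((fs.eraseIdx i).getD k 0) (gs.getD j 0))) • BVmono anti gen ((fs.eraseIdx i).eraseIdx k) (D (fs.getD i 0) :: gs.eraseIdx j))) = 0 := by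
    rw [reindex_sum]
    refine sum_pairs_eq_zero _ (fun p hp => ?_)
      (fun a b => ∑ j ∈ Finset.range gs.length,
        (((-1:ℝ)^a * β (fs.getD a 0) (gs.getD j 0) * (-1:ℝ)^(if b < a then b else b - 1)) • BVmono anti gen ((fs.eraseIdx a).eraseIdx (if b < a then b else b - 1)) (D ((fs.eraseIdx a).getD (if b < a then b else b - 1) 0) :: gs.eraseIdx j) + ((-1:ℝ)^a * ((-1:ℝ)^(if b < a then b else b - 1) * β ((fs.eraseIdx a).getD (if b < a then b else b - 1) 0) (gs.getD j 0))) • BVmono anti gen ((fs.eraseIdx a).eraseIdx (if b < a then b else b - 1)) (D (fs.getD a 0) :: gs.eraseIdx j))) (fun p hp => ?_)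
    · simp only [Finset.mem_filter, Finset.mem_product, Finset.mem_range] at hp ⊢
      omega
    · obtain ⟨a, b⟩ := p
      simp only [Finset.mem_filter, Finset.mem_product, Finset.mem_range] at hp
      obtain ⟨⟨ha, hb⟩, hab⟩ := hp
      simp only
      rw [← Finset.sum_neg_distrib]
      refine Finset.sum_congr rfl fun j hj => ?_
      rw [getD_eraseIdx 0 fs a b ha hb hab, getD_eraseIdx 0 fs b a hb ha (Ne.symm hab),
        erase2_symm fs a b hab]
      have hs := sign_antisymm a b hab
      match_scalars <;>
        first
        | linear_combination (β (fs.getD a 0) (gs.getD j 0)) * hs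
        | linear_combination (β (fs.getD b 0) (gs.getD j 0)) * hs
  have hz0 : (∑ i ∈ Finset.range fs.length, ∑ k ∈ Finset.range (fs.length - 1), ((-1:ℝ)^i * ((-1:ℝ)^k * β ((fs.eraseIdx i).getD k 0) (D (fs.getD i 0)))) • BVmono anti gen ((fs.eraseIdx i).eraseIdx k) gs) = 0 := by
    rw [reindex_sum]
    refine sum_pairs_eq_zero _ (fun p hp => ?_)
      (fun a b => ((-1:ℝ)^a * ((-1:ℝ)^(if b < a then b else b - 1) * β ((fs.eraseIdx a).getD (if b < a then b else b - 1) 0) (D (fs.getD a 0)))) • BVmono anti gen ((fs.eraseIdx a).eraseIdx (if b < a then b else b - 1)) gs) (fun p hp => ?_)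
    · simp only [Finset.mem_filter, Finset.mem_product, Finset.mem_range] at hp ⊢
      omega
    · obtain ⟨a, b⟩ := p
      simp only [Finset.mem_filter, Finset.mem_product, Finset.mem_range] at hp
      obtain ⟨⟨ha, hb⟩, hab⟩ := hp
      simp only
      rw [getD_eraseIdx 0 fs a b ha hb hab, getD_eraseIdx 0 fs b a hb ha (Ne.symm hab),
        erase2_symm fs a b hab]
      have hs := sign_antisymm a b hab
      have hc : β (fs.getD b 0) (D (fs.getD a 0)) = β (fs.getD a 0) (D (fs.getD b 0)) := by
        rw [hβ, hD]
      match_scalars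
      linear_combination (β (fs.getD b 0) (D (fs.getD a 0))) * hs
        - ((-1:ℝ)^b * (-1:ℝ)^(if a < b then a else a - 1)) * hc
  rw [hz1, hz0, add_zero]

end Key

/-- If the classical BV differential `Δcl` (the degree `+1` derivation extending
`f⋆ ↦ D f`) and the quantum contraction `δ` (built from the symmetric bilinear form `β`)
are as in the free BV complex, and `D` is self-adjoint for `β`, then `Δcl` and `δ`
anticommute. -/
theorem stmt_12 (V : Type*) [AddCommGroup V] [Module ℝ V]
    (β : V →ₗ[ℝ] V →ₗ[ℝ] ℝ) (hβ : ∀ v w, β v w = β w v)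
    (D : V →ₗ[ℝ] V) (hD : ∀ f g, β (D f) g = β f (D g))
    (A : Type*) [Ring A] [Algebra ℝ A]
    (anti gen : V →ₗ[ℝ] A)
    (hcomm : ∀ v w, gen v * gen w = gen w * gen v)
    (hmix : ∀ v w, anti v * gen w = gen w * anti v)
    (hanti : ∀ v w, anti v * anti w = -(anti w * anti v))
    (hspan : Submodule.span ℝ {x : A | ∃ fs gs : List V, x = BVmono anti gen fs gs} = ⊤)
    (Δcl : A →ₗ[ℝ] A)
    (hΔ : ∀ fs gs : List V,
      Δcl (BVmono anti gen fs gs) =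
        ∑ i : Fin fs.length, ((-1 : ℝ) ^ (i : ℕ)) •
          BVmono anti gen (fs.eraseIdx (i : ℕ)) (D (fs.get i) :: gs))
    (δ : A →ₗ[ℝ] A)
    (hδ : ∀ fs gs : List V,
      δ (BVmono anti gen fs gs) =
        ∑ i : Fin fs.length, ∑ j : Fin gs.length,
          ((-1 : ℝ) ^ (i : ℕ) * β (fs.get i) (gs.get j)) •
            BVmono anti gen (fs.eraseIdx (i : ℕ)) (gs.eraseIdx (j : ℕ))) :
    ∀ x, Δcl (δ x) + δ (Δcl x) = 0 := by
  intro x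
  have hx : x ∈ Submodule.span ℝ {x : A | ∃ fs gs : List V, x = BVmono anti gen fs gs} := by
    rw [hspan]; trivial
  induction hx using Submodule.span_induction with
  | mem y hy =>
    obtain ⟨fs, gs, rfl⟩ := hy
    exact key β D anti gen Δcl δ hβ hD hΔ hδ fs gs
  | zero => simp
  | add y z _ _ hy hz =>
    simp only [map_add]
    rw [add_add_add_comm, hy, hz, add_zero]
  | smul r y _ hy =>
    simp only [map_smul]
    rw [← smul_add, hy, smul_zero]
end

section
/- Let m ≥ 0, Q ∈ C_c^∞(ℝ) even with ∫ Q·φ_q = 1, P := −Q', Q_t(x) := Q(x−t), P_t(x) := P(x−t), and define the modified observables 𝒬_t := φ_p(t)·P_t − φ_p'(t)·Q_t and 𝒫_t := φ_q(t)·P_t − φ_q'(t)·Q_t, where φ_q, φ_p span ker(−d²/dx² + m²) with φ_p' = φ_q. Then for every x, ∂/∂t 𝒬_t(x) = (∂²/∂x² − m²)(φ_p(t)·Q_t(x)) and ∂/∂t 𝒫_t(x) = (∂²/∂x² − m²)(φ_q(t)·Q_t(x)). -/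
open MeasureTheory

lemma aux_key (f Q : ℝ → ℝ) (hf : ContDiff ℝ (⊤ : ℕ∞) f) (hQ : ContDiff ℝ (⊤ : ℕ∞) Q) (m : ℝ)
    (hker : ∀ x, deriv (deriv f) x = m ^ 2 * f x) (t x : ℝ) :
    deriv (fun s => f s * (-(deriv Q (x - s))) - deriv f s * Q (x - s)) t =
      deriv (deriv (fun y => f t * Q (y - t))) x - m ^ 2 * (f t * Q (x - t)) := by
  have hQi : ContDiff ℝ ((⊤ : ℕ∞) : WithTop ℕ∞) Q := hQ.of_le (by simp)
  have hfi : ContDiff ℝ ((⊤ : ℕ∞) : WithTop ℕ∞) f := hf.of_le (by simp)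
  have hQ' : ContDiff ℝ ((⊤ : ℕ∞) : WithTop ℕ∞) (deriv Q) := (contDiff_infty_iff_deriv.mp hQi).2
  have hf' : ContDiff ℝ ((⊤ : ℕ∞) : WithTop ℕ∞) (deriv f) := (contDiff_infty_iff_deriv.mp hfi).2
  -- RHS computation
  have hrhs1 : deriv (fun y => f t * Q (y - t)) = fun y => f t * deriv Q (y - t) := by
    funext y
    have h1 : HasDerivAt (fun y : ℝ => Q (y - t)) (deriv Q (y - t)) y := by
      have := (hQi.differentiable (by simp) (y - t)).hasDerivAt.comp y
        ((hasDerivAt_id y).sub_const t)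
      simpa [Function.comp_def] using this
    simpa using (h1.const_mul (f t)).deriv
  have hrhs2 : deriv (deriv (fun y => f t * Q (y - t))) x
      = f t * deriv (deriv Q) (x - t) := by
    rw [hrhs1]
    have h1 : HasDerivAt (fun y : ℝ => deriv Q (y - t)) (deriv (deriv Q) (x - t)) x := by
      have := (hQ'.differentiable (by simp) (x - t)).hasDerivAt.comp x
        ((hasDerivAt_id x).sub_const t)
      simpa [Function.comp_def] using this
    simpa using (h1.const_mul (f t)).deriv
  -- LHS computation
  have hin : HasDerivAt (fun s : ℝ => x - s) (-1) t := by
    simpa using (hasDerivAt_id t).const_sub x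
  have hQxs : HasDerivAt (fun s => Q (x - s)) (-(deriv Q (x - t))) t := by
    have := (hQi.differentiable (by simp) (x - t)).hasDerivAt.comp t hin
    simpa [mul_comm, Function.comp_def] using this
  have hQ'xs : HasDerivAt (fun s => deriv Q (x - s)) (-(deriv (deriv Q) (x - t))) t := by
    have := (hQ'.differentiable (by simp) (x - t)).hasDerivAt.comp t hin
    simpa [mul_comm, Function.comp_def] using this
  have h1 : HasDerivAt (fun s => f s * (-(deriv Q (x - s))))
      (deriv f t * (-(deriv Q (x - t))) + f t * (deriv (deriv Q) (x - t))) t := by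
    have h := (hfi.differentiable (by simp) t).hasDerivAt.mul hQ'xs.neg
    simp only [neg_neg] at h
    exact h
  have h2 : HasDerivAt (fun s => deriv f s * Q (x - s))
      (deriv (deriv f) t * Q (x - t) + deriv f t * (-(deriv Q (x - t)))) t :=
    (hf'.differentiable (by simp) t).hasDerivAt.mul hQxs
  have : deriv (fun s => f s * (-(deriv Q (x - s))) - deriv f s * Q (x - s)) t = _ :=
    (h1.sub h2).deriv
  rw [this, hrhs2, hker t]
  ring

/-- The `t`-derivative of the modified position and momentum observables
`𝒬_t = φ_p(t) P_t - φ_p'(t) Q_t` and `𝒫_t = φ_q(t) P_t - φ_q'(t) Q_t` is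
`(∂²/∂x² - m²)` applied to `φ_p(t) Q_t` (resp. `φ_q(t) Q_t`). -/
theorem stmt_15 (m : ℝ) (hm : 0 ≤ m)
    (φq φp : ℝ → ℝ) (hφq : ContDiff ℝ (⊤ : ℕ∞) φq) (hφp : ContDiff ℝ (⊤ : ℕ∞) φp)
    (hφqker : ∀ x, -(deriv (deriv φq) x) + m ^ 2 * φq x = 0)
    (hφpker : ∀ x, -(deriv (deriv φp) x) + m ^ 2 * φp x = 0)
    (hder : deriv φp = φq)
    (Q : ℝ → ℝ) (hQ : ContDiff ℝ (⊤ : ℕ∞) Q) (hsupp : HasCompactSupport Q)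
    (heven : ∀ x, Q (-x) = Q x)
    (hnorm : ∫ x : ℝ, Q x * φq x = 1)
    (P : ℝ → ℝ) (hP : P = fun x => -(deriv Q x)) :
    (∀ t x : ℝ,
      deriv (fun s => φp s * P (x - s) - deriv φp s * Q (x - s)) t =
        deriv (deriv (fun y => φp t * Q (y - t))) x - m ^ 2 * (φp t * Q (x - t))) ∧
    (∀ t x : ℝ,
      deriv (fun s => φq s * P (x - s) - deriv φq s * Q (x - s)) t =
        deriv (deriv (fun y => φq t * Q (y - t))) x - m ^ 2 * (φq t * Q (x - t))) := by
  subst hP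
  constructor
  · intro t x
    exact aux_key φp Q hφp hQ m (fun y => by linarith [hφpker y]) t x
  · intro t x
    exact aux_key φq Q hφq hQ m (fun y => by linarith [hφqker y]) t x
end
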